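/- For every nonnegative integer r, there exists a polynomial Q_r with integer coefficients, of degree r, such that for all positive integers n, 2^r·Σ_{k=0}^{2n} C(2n,k)·(n−k)^{2r} = Q_r(n)·2^{2n}. -/

import Mathlib

/-!
Write `S_r(n) = ∑_k C(2n,k) (n-k)^(2r)`. From `(n-k)^2 = n^2 - k(2n-k)` and
`k(2n-k) C(2n,k) = 2n(2n-1) C(2n-2,k-1)` one gets `S_(r+1)(n) = n^2 S_r(n) - 2n(2n-1) S_r(n-1)`,
so `Q_0 = 1`, `Q_(r+1)(X) = 2X^2 Q_r(X) - X(2X-1) Q_r(X-1)` satisfies the identity (even at `n = 0`).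
If `Q` has leading term `a X^d`, then `Q(X) - Q(X-1)` has leading term `d a X^(d-1)`, so the
coefficient of `X^(r+1)` in `Q_(r+1)` is `2r+1` times the leading coefficient of `Q_r`;
hence `Q_r` has degree `r`.
-/

open Finset Polynomial

def centeredBinomSum (n : ℕ) (f : ℤ → ℤ) : ℤ :=
  ∑ k ∈ range (2 * n + 1), ((2 * n).choose k : ℤ) * f (n - k)

lemma choose_mul_mul_sub {N j : ℕ} (hj : j ≤ N) :
    ((N + 2).choose (j + 1) : ℤ) * ((j + 1) * (N + 1 - j))
      = (N + 2) * (N + 1) * N.choose j := by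
  have h1 : ((N + 2 : ℕ) : ℤ) * (N + 1).choose j = (N + 2).choose (j + 1) * (j + 1) := by
    exact_mod_cast Nat.add_one_mul_choose_eq (N + 1) j
  have h2 : (N.choose j : ℤ) * (N + 1) = (N + 1).choose j * (N + 1 - j) := by
    have := Nat.choose_mul_succ_eq N j
    rw [← Nat.cast_inj (R := ℤ)] at this
    push_cast [Nat.cast_sub (show j ≤ N + 1 by omega)] at this
    exact this
  push_cast at h1
  linear_combination (-(N + 1 - j : ℤ)) * h1 - (N + 2 : ℤ) * h2

lemma centeredBinomSum_sq_mul (m : ℕ) (f : ℤ → ℤ) :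
    centeredBinomSum (m + 1) (fun x => x ^ 2 * f x)
      = (m + 1) ^ 2 * centeredBinomSum (m + 1) f
        - 2 * (m + 1) * (2 * m + 1) * centeredBinomSum m f := by
  have hsq : ∀ k : ℕ, (((m + 1 : ℕ) : ℤ) - k) ^ 2 = (m + 1) ^ 2 - k * (2 * m + 2 - k) := by
    intro k; push_cast; ring
  have hweighted : ∑ k ∈ range (2 * (m + 1) + 1),
      ((2 * (m + 1)).choose k : ℤ) * (k * (2 * m + 2 - k)) * f ((m + 1 : ℕ) - k)
        = 2 * (m + 1) * (2 * m + 1) * centeredBinomSum m f := by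
    rw [show 2 * (m + 1) + 1 = 2 * m + 1 + 1 + 1 by ring, sum_range_succ, sum_range_succ',
      centeredBinomSum, mul_sum]
    push_cast
    simp only [sub_self, mul_zero, zero_mul, add_zero]
    refine sum_congr rfl fun j hj => ?_
    rw [show (m : ℤ) + 1 - (j + 1) = m - j by ring]
    have hj' : j ≤ 2 * m := by rw [mem_range] at hj; omega
    have key := choose_mul_mul_sub hj'
    rw [show 2 * m + 2 = 2 * (m + 1) by ring] at key
    push_cast at key
    linear_combination f (m - j) * key
  rw [← hweighted]
  simp only [centeredBinomSum, hsq, mul_sum, ← sum_sub_distrib]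
  exact sum_congr rfl fun k _ => by ring

section Taylor
variable {R : Type*} [CommRing R] (c : R) {P : R[X]}

lemma coeff_taylor_of_natDegree_le {e : ℕ} (hP : P.natDegree ≤ e + 1) :
    (taylor c P).coeff e = P.coeff e + (e + 1) * c * P.coeff (e + 1) := by
  have hdeg : (hasseDeriv e P).natDegree < 2 :=
    (natDegree_hasseDeriv_le P e).trans_lt (by omega)
  rw [taylor_coeff, eval_eq_sum_range' hdeg]
  simp only [hasseDeriv_coeff, sum_range_succ, range_one, sum_singleton, zero_add,
    Nat.choose_self, add_comm 1 e, Nat.choose_succ_self_right, pow_zero, pow_one]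
  push_cast
  ring

lemma natDegree_X_mul_taylor_sub_le {d : ℕ} (hP : P.natDegree ≤ d) :
    (X * (taylor c P - P)).natDegree ≤ d := by
  rw [natDegree_le_iff_coeff_eq_zero]
  intro N hN
  obtain ⟨e, rfl⟩ : ∃ e, N = e + 1 := ⟨N - 1, by omega⟩
  rw [coeff_X_mul, coeff_sub, coeff_taylor_of_natDegree_le c (by omega),
    coeff_eq_zero_of_natDegree_lt (p := P) (n := e + 1) (by omega)]
  ring

lemma coeff_X_mul_taylor_sub {d : ℕ} (hP : P.natDegree ≤ d) :
    (X * (taylor c P - P)).coeff d = d * c * P.coeff d := by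
  rcases d with _ | e
  · simp
  · rw [coeff_X_mul, coeff_sub, coeff_taylor_of_natDegree_le c hP]
    push_cast
    ring

end Taylor

noncomputable def momentPoly : ℕ → ℤ[X]
  | 0 => 1
  | r + 1 => 2 * X ^ 2 * momentPoly r - X * (2 * X - 1) * taylor (-1) (momentPoly r)

lemma momentPoly_succ (r : ℕ) :
    momentPoly (r + 1) = X * (taylor (-1) (momentPoly r)
      - 2 * (X * (taylor (-1) (momentPoly r) - momentPoly r))) := by
  rw [momentPoly]; ring

lemma eval_momentPoly_succ (r : ℕ) (x : ℤ) :
    (momentPoly (r + 1)).eval x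
      = 2 * x ^ 2 * (momentPoly r).eval x - x * (2 * x - 1) * (momentPoly r).eval (x - 1) := by
  simp [momentPoly, taylor_eval, sub_eq_add_neg]

lemma centeredBinomSum_pow_eq (r n : ℕ) :
    2 ^ r * centeredBinomSum n (· ^ (2 * r)) = (momentPoly r).eval (n : ℤ) * 2 ^ (2 * n) := by
  induction r generalizing n with
  | zero =>
    simp only [centeredBinomSum, momentPoly, pow_zero, mul_zero, one_mul, mul_one, eval_one]
    exact_mod_cast Nat.sum_range_choose (2 * n)
  | succ r ih =>
    rcases n with _ | m
    · simp [centeredBinomSum, eval_momentPoly_succ]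
    · have hpow : (fun x : ℤ => x ^ (2 * (r + 1))) = fun x => x ^ 2 * x ^ (2 * r) := by
        ext x; ring
      rw [hpow, centeredBinomSum_sq_mul, eval_momentPoly_succ]
      have ih1 := ih (m + 1)
      have ih0 := ih m
      push_cast at ih1 ⊢
      rw [add_sub_cancel_right]
      linear_combination (2 * ((m : ℤ) + 1) ^ 2) * ih1 - 4 * (m + 1) * (2 * m + 1) * ih0

lemma natDegree_momentPoly_le (r : ℕ) : (momentPoly r).natDegree ≤ r := by
  induction r with
  | zero => simp [momentPoly]
  | succ r ih =>
    have hY := natDegree_X_mul_taylor_sub_le (-1 : ℤ) ih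
    have h2Y : (2 * (X * (taylor (-1) (momentPoly r) - momentPoly r))).natDegree ≤ r :=
      natDegree_mul_le.trans (by simpa using hY)
    have hinner : (taylor (-1) (momentPoly r)
        - 2 * (X * (taylor (-1) (momentPoly r) - momentPoly r))).natDegree ≤ r :=
      (natDegree_sub_le _ _).trans (max_le (by rwa [natDegree_taylor]) h2Y)
    rw [momentPoly_succ]
    exact natDegree_mul_le.trans (by rw [natDegree_X]; omega)

lemma coeff_momentPoly_succ (r : ℕ) :
    (momentPoly (r + 1)).coeff (r + 1) = (2 * r + 1) * (momentPoly r).coeff r := by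
  have hr := natDegree_momentPoly_le r
  rw [momentPoly_succ, coeff_X_mul, coeff_sub, coeff_ofNat_mul,
    coeff_X_mul_taylor_sub (-1) hr, coeff_taylor_of_natDegree_le (-1) (by omega),
    coeff_eq_zero_of_natDegree_lt (p := momentPoly r) (n := r + 1) (by omega)]
  ring

lemma coeff_momentPoly_self_pos (r : ℕ) : 0 < (momentPoly r).coeff r := by
  induction r with
  | zero => simp [momentPoly]
  | succ r ih => rw [coeff_momentPoly_succ]; positivity

lemma degree_momentPoly (r : ℕ) : (momentPoly r).degree = r :=
  degree_eq_of_le_of_coeff_ne_zero (degree_le_of_natDegree_le (natDegree_momentPoly_le r))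
    (coeff_momentPoly_self_pos r).ne'

theorem stmt_12 (r : ℕ) :
    ∃ Q : Polynomial ℤ, Q.degree = r ∧
      ∀ n : ℕ, 0 < n →
        2 ^ r * ∑ k ∈ Finset.range (2 * n + 1),
            (Nat.choose (2 * n) k : ℤ) * ((n : ℤ) - k) ^ (2 * r) =
          Q.eval (n : ℤ) * 2 ^ (2 * n) :=
  ⟨momentPoly r, degree_momentPoly r, fun n _ => centeredBinomSum_pow_eq r n⟩
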